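/- In Euclidean space ℝⁿ there is no nontrivial stationary 1-cycle: if a finite collection of points p₁,…,p_l in ℝⁿ together with finitely many straight-line segments joining some of them (with positive integer multiplicities, every point adjacent to at least one segment) has the property that at every point pᵢ the sum of the unit vectors tangent to the adjacent segments (directed away from pᵢ, counted with multiplicity) vanishes, then all segments are constant (have zero length). -/

import Mathlib

/-!
Pair the stationarity condition at `pᵢ` with the position vector `pᵢ` and sum over `i`.
Regrouping by segments, the segment from `x` to `y` contributes
`⟪x, (y - x)/‖y - x‖⟫ + ⟪y, (x - y)/‖x - y‖⟫ = -‖y - x‖`, so the total is minus the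
weighted length of the cycle (the first variation of length under the dilation field
`x ↦ x`). Stationarity makes it vanish, hence every segment has length zero.
-/

open Finset

section

variable {E : Type*} [NormedAddCommGroup E] [InnerProductSpace ℝ E]

theorem inner_smul_inv_norm_sub_add_inner_smul_inv_norm_sub (x y : E) :
    inner ℝ x (‖y - x‖⁻¹ • (y - x)) + inner ℝ y (‖x - y‖⁻¹ • (x - y)) = -‖y - x‖ := by
  rw [← neg_sub y x, norm_neg, smul_neg, inner_neg_right, real_inner_smul_right,
    real_inner_smul_right, ← sub_eq_add_neg, ← mul_sub, ← inner_sub_left, ← neg_sub y x,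
    inner_neg_left, real_inner_self_eq_norm_sq]
  rcases eq_or_ne ‖y - x‖ 0 with h | h
  · simp [h]
  · field_simp

theorem sum_inner_sum_ite_endpoints {ι σ : Type*} [Fintype ι] [Fintype σ] [DecidableEq ι]
    (p : ι → E) (a b : σ → ι) (u v : σ → E) :
    ∑ i, inner ℝ (p i) (∑ s, ((if a s = i then u s else 0) + (if b s = i then v s else 0)))
      = ∑ s, (inner ℝ (p (a s)) (u s) + inner ℝ (p (b s)) (v s)) := by
  simp_rw [inner_sum, inner_add_right, apply_ite (inner ℝ _), inner_zero_right]
  rw [sum_comm]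
  simp [sum_add_distrib]

end

theorem no_stationary_one_cycle_in_euclidean_space_general
    (n l m : ℕ) (p : Fin l → EuclideanSpace ℝ (Fin n))
    (a b : Fin m → Fin l) (mult : Fin m → ℕ) (hmult : ∀ s, 0 < mult s)
    (hstat : ∀ i : Fin l,
      (∑ s : Fin m,
        ((if a s = i then (mult s : ℝ) • (‖p (b s) - p (a s)‖⁻¹ • (p (b s) - p (a s))) else 0)
          + (if b s = i then (mult s : ℝ) • (‖p (a s) - p (b s)‖⁻¹ • (p (a s) - p (b s)))
              else 0))) = 0) :
    ∀ s : Fin m, p (a s) = p (b s) := by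
  have hlength : ∑ s, (mult s : ℝ) * ‖p (b s) - p (a s)‖ = 0 := by
    have h := sum_inner_sum_ite_endpoints p a b
      (fun s => (mult s : ℝ) • (‖p (b s) - p (a s)‖⁻¹ • (p (b s) - p (a s))))
      (fun s => (mult s : ℝ) • (‖p (a s) - p (b s)‖⁻¹ • (p (a s) - p (b s))))
    have hsegment : ∀ s, inner ℝ (p (a s))
        ((mult s : ℝ) • (‖p (b s) - p (a s)‖⁻¹ • (p (b s) - p (a s)))) + inner ℝ (p (b s))
        ((mult s : ℝ) • (‖p (a s) - p (b s)‖⁻¹ • (p (a s) - p (b s))))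
          = -((mult s : ℝ) * ‖p (b s) - p (a s)‖) := fun s => by
      rw [real_inner_smul_right (p (a s)), real_inner_smul_right (p (b s)), ← mul_add,
        inner_smul_inv_norm_sub_add_inner_smul_inv_norm_sub, mul_neg]
    simp only [hstat, inner_zero_right, sum_const_zero, hsegment, sum_neg_distrib] at h
    linarith
  intro s
  have hs := (sum_eq_zero_iff_of_nonneg fun t _ => by positivity).mp hlength s (mem_univ s)
  have hmult_ne : (mult s : ℝ) ≠ 0 := by exact_mod_cast (hmult s).ne'
  rw [mul_eq_zero, or_iff_right hmult_ne, norm_eq_zero, sub_eq_zero] at hs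
  exact hs.symm

/-- There is no nontrivial stationary 1-cycle in Euclidean space `ℝⁿ`.
A configuration consists of points `p 1, …, p l` (the vertices) and straight segments
indexed by `Fin m`, the segment `s` joining `p (a s)` to `p (b s)` with positive integer
multiplicity `mult s`; every vertex is adjacent to at least one segment.  At each vertex
`i` the stationarity condition requires the sum, over adjacent segments counted with
multiplicity, of the unit vectors along the segments directed away from `p i` to vanish
(a constant segment contributes the zero vector, since `‖0‖⁻¹ • 0 = 0`).  Then every
segment must be constant (of zero length). -/
theorem no_stationary_one_cycle_in_euclidean_space
    (n l m : ℕ) (p : Fin l → EuclideanSpace ℝ (Fin n))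
    (a b : Fin m → Fin l) (mult : Fin m → ℕ) (hmult : ∀ s, 0 < mult s)
    (hadj : ∀ i : Fin l, ∃ s : Fin m, a s = i ∨ b s = i)
    (hstat : ∀ i : Fin l,
      (∑ s : Fin m,
        ((if a s = i then (mult s : ℝ) • (‖p (b s) - p (a s)‖⁻¹ • (p (b s) - p (a s))) else 0)
          + (if b s = i then (mult s : ℝ) • (‖p (a s) - p (b s)‖⁻¹ • (p (a s) - p (b s)))
              else 0))) = 0) :
    ∀ s : Fin m, p (a s) = p (b s) :=
  no_stationary_one_cycle_in_euclidean_space_general n l m p a b mult hmult hstat
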